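/- Let (λ₁,λ₂,λ₃,λ₄) ∈ ℝ⁴ and x,y,z,w ∈ ℝ, and write p(s,t) = λ₁s³+λ₂s²t+λ₃st²+λ₄t³, p₁(s,t) = 3λ₁s²+2λ₂st+λ₃t² (the partial derivative of p in its first variable) and p₂(s,t) = λ₂s²+2λ₃st+3λ₄t². Define λ₁′ = λ₁w³ − λ₂zw² + λ₃z²w − λ₄z³, λ₂′ = 3λ₄xz² − 2λ₃xzw + λ₂xw² − λ₃yz² + 2λ₂yzw − 3λ₁yw², λ₃′ = −3λ₄x²z + λ₃x²w + 2λ₃xyz − 2λ₂xyw − λ₂y²z + 3λ₁y²w, λ₄′ = λ₄x³ − λ₃x²y + λ₂xy² − λ₁y³. Then: (a) the binary cubic with coefficients (λ₁′,λ₂′,λ₃′,λ₄′) equals the cubic (u₁,u₂) ↦ p(wu₁ − yu₂, −zu₁ + xu₂); (b) λ₂′ − λ₄′ = p(y,−x) − y·p₁(w,−z) + x·p₂(w,−z); (c) λ₁′ − λ₃′ = p(w,−z) − w·p₁(y,−x) + z·p₂(y,−x). In particular, the transformed structure is half-flat (λ₂′ = λ₄′) precisely when the right-hand side of (b) vanishes,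 and Hermitian precisely when additionally the right-hand side of (c) vanishes. -/

import Mathlib

noncomputable section

/-- The binary cubic `p(s,t) = λ₁s³ + λ₂s²t + λ₃st² + λ₄t³` with coefficient vector `l`. -/
def cubicP (l : Fin 4 → ℝ) (s t : ℝ) : ℝ :=
  l 0 * s ^ 3 + l 1 * s ^ 2 * t + l 2 * s * t ^ 2 + l 3 * t ^ 3

/-- The partial derivative of `cubicP l` in its first variable. -/
def cubicP1 (l : Fin 4 → ℝ) (s t : ℝ) : ℝ :=
  3 * l 0 * s ^ 2 + 2 * l 1 * s * t + l 2 * t ^ 2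

/-- The partial derivative of `cubicP l` in its second variable. -/
def cubicP2 (l : Fin 4 → ℝ) (s t : ℝ) : ℝ :=
  l 1 * s ^ 2 + 2 * l 2 * s * t + 3 * l 3 * t ^ 2

/-! With `a = (w,-z)` and `b = (-y,x)` the reframed cubic is `q(u₁,u₂) = p(u₁a + u₂b)`. Expanding
a binary cubic along a plane gives `q = p(a)u₁³ + (Dp(a)·b)u₁²u₂ + (Dp(b)·a)u₁u₂² + p(b)u₂³`, so
`λ₁′ = p(a)`, `λ₄′ = p(b)`, and `λ₂′`, `λ₃′` are the directional derivatives, written with the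
partials `p₁`, `p₂`. Identities (b) and (c) follow because `p` is odd and `p₁`, `p₂` are even. -/

theorem cubicP_neg (l : Fin 4 → ℝ) (s t : ℝ) : cubicP l (-s) (-t) = -cubicP l s t := by
  unfold cubicP; ring

theorem cubicP1_neg (l : Fin 4 → ℝ) (s t : ℝ) : cubicP1 l (-s) (-t) = cubicP1 l s t := by
  unfold cubicP1; ring

theorem cubicP2_neg (l : Fin 4 → ℝ) (s t : ℝ) : cubicP2 l (-s) (-t) = cubicP2 l s t := by
  unfold cubicP2; ring

theorem cubicP_mul_add_mul (l : Fin 4 → ℝ) (a b c d u v : ℝ) :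
    cubicP l (a * u + c * v) (b * u + d * v) =
      cubicP l a b * u ^ 3 + (c * cubicP1 l a b + d * cubicP2 l a b) * u ^ 2 * v +
        (a * cubicP1 l c d + b * cubicP2 l c d) * u * v ^ 2 + cubicP l c d * v ^ 3 := by
  unfold cubicP cubicP1 cubicP2; ring

theorem stmt14 (l1 l2 l3 l4 x y z w : ℝ) :
    let l : Fin 4 → ℝ := ![l1, l2, l3, l4]
    let l1' := l1 * w ^ 3 - l2 * z * w ^ 2 + l3 * z ^ 2 * w - l4 * z ^ 3
    let l2' := 3 * l4 * x * z ^ 2 - 2 * l3 * x * z * w + l2 * x * w ^ 2 - l3 * y * z ^ 2 +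
      2 * l2 * y * z * w - 3 * l1 * y * w ^ 2
    let l3' := -3 * l4 * x ^ 2 * z + l3 * x ^ 2 * w + 2 * l3 * x * y * z - 2 * l2 * x * y * w -
      l2 * y ^ 2 * z + 3 * l1 * y ^ 2 * w
    let l4' := l4 * x ^ 3 - l3 * x ^ 2 * y + l2 * x * y ^ 2 - l1 * y ^ 3
    -- (a) the transformed cubic is `p(w u₁ − y u₂, −z u₁ + x u₂)`
    (∀ u1 u2 : ℝ,
        l1' * u1 ^ 3 + l2' * u1 ^ 2 * u2 + l3' * u1 * u2 ^ 2 + l4' * u2 ^ 3 =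
          cubicP l (w * u1 - y * u2) (-(z * u1) + x * u2)) ∧
    -- (b)
    (l2' - l4' = cubicP l y (-x) - y * cubicP1 l w (-z) + x * cubicP2 l w (-z)) ∧
    -- (c)
    (l1' - l3' = cubicP l w (-z) - w * cubicP1 l y (-x) + z * cubicP2 l y (-x)) ∧
    -- half-flatness of the transformed structure
    (l2' = l4' ↔ cubicP l y (-x) - y * cubicP1 l w (-z) + x * cubicP2 l w (-z) = 0) ∧
    -- the Hermitian condition for the transformed structure
    ((l2' = l4' ∧ l1' = l3') ↔
      (cubicP l y (-x) - y * cubicP1 l w (-z) + x * cubicP2 l w (-z) = 0 ∧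
        cubicP l w (-z) - w * cubicP1 l y (-x) + z * cubicP2 l y (-x) = 0)) := by
  intro l l1' l2' l3' l4'
  have hl : l 0 = l1 ∧ l 1 = l2 ∧ l 2 = l3 ∧ l 3 = l4 := ⟨rfl, rfl, rfl, rfl⟩
  have h1 : l1' = cubicP l w (-z) := by simp only [cubicP, hl, l1']; ring
  have h2 : l2' = -y * cubicP1 l w (-z) + x * cubicP2 l w (-z) := by
    simp only [cubicP1, cubicP2, hl, l2']; ring
  have h3 : l3' = w * cubicP1 l (-y) x + -z * cubicP2 l (-y) x := by
    simp only [cubicP1, cubicP2, hl, l3']; ring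
  have h4 : l4' = cubicP l (-y) x := by simp only [cubicP, hl, l4']; ring
  have hp : cubicP l (-y) x = -cubicP l y (-x) := by simpa using cubicP_neg l y (-x)
  have hp1 : cubicP1 l (-y) x = cubicP1 l y (-x) := by simpa using cubicP1_neg l y (-x)
  have hp2 : cubicP2 l (-y) x = cubicP2 l y (-x) := by simpa using cubicP2_neg l y (-x)
  have hb : l2' - l4' = cubicP l y (-x) - y * cubicP1 l w (-z) + x * cubicP2 l w (-z) := by
    rw [h2, h4, hp]; ring
  have hc : l1' - l3' = cubicP l w (-z) - w * cubicP1 l y (-x) + z * cubicP2 l y (-x) := by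
    rw [h1, h3, hp1, hp2]; ring
  refine ⟨fun u1 u2 => ?_, hb, hc, by rw [← hb, sub_eq_zero],
    by rw [← hb, ← hc, sub_eq_zero, sub_eq_zero]⟩
  rw [h1, h2, h3, h4, ← cubicP_mul_add_mul]
  congr 1 <;> ring
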